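/- arXiv:2212.05424 — 2 statements merged into one kernel-verified Lean document; each statement's English description precedes it below -/
import Mathlib

section
/- Let n ≥ 1, and for each i ∈ {1,...,n} let D_i ∈ {0,1}, Y_i ∈ ℝ, and X_i ∈ ℝ^d. Let w_{i←j} ∈ ℝ be given for all pairs (i,j) with D_i + D_j = 1, and let μ̂_0, μ̂_1 : ℝ^d → ℝ. Define R̂_i = Y_i − μ̂_{D_i}(X_i), imputed values Ŷ_i(0) = Y_i if D_i = 0 and Ŷ_i(0) = Σ_{j : D_j = 0} w_{i←j}(Y_j + μ̂_0(X_i) − μ̂_0(X_j)) if D_i = 1, and symmetrically Ŷ_i(1) = Y_i if D_i = 1 and Ŷ_i(1) = Σ_{j : D_j = 1} w_{i←j}(Y_j + μ̂_1(X_i) − μ̂_1(X_j)) if D_i = 0. Let τ̂_w = (1/n) Σ_i [Ŷ_i(1) − Ŷ_i(0)] and τ̂^reg = (1/n) Σ_i [μ̂_1(X_i) − μ̂_0(X_i)]. Then τ̂_w = τ̂^reg + (1/n) Σ_{i : D_i = 1} (1 + Σ_{j : D_j = 0} w_{j←i}) R̂_i − (1/n) Σ_{i : D_i = 0} (1 +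 Σ_{j : D_j = 1} w_{j←i}) R̂_i + (1/n) Σ_i (2D_i − 1)(1 − Σ_{j : D_j = 1 − D_i} w_{i←j}) μ̂_{1−D_i}(X_i). -/
/-!
On a treated unit, `Ŷ(1) - Ŷ(0) = R̂ᵢ + μ̂₁(Xᵢ) - ∑ⱼ wᵢⱼ (Yⱼ + μ̂₀(Xᵢ) - μ̂₀(Xⱼ))`, and for a control
donor `j` the summand is `wᵢⱼ (R̂ⱼ + μ̂₀(Xᵢ))`; symmetrically on control units. Exchanging the
order of the double sum, each residual `R̂ⱼ` collects the total weight `∑ᵢ wᵢⱼ` it donates, and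
the fitted values left over, compared with `τ̂ʳᵉᵍ`, form the last term.
-/

open Finset

section Imputation

variable {ι : Type*}

theorem sum_eq_sum_filter_eq_one_add_sum_filter_eq_zero [Fintype ι] {M : Type*} [AddCommMonoid M]
    {D : ι → ℕ} (hD : ∀ i, D i = 0 ∨ D i = 1) (f : ι → M) :
    ∑ i, f i = ∑ i ∈ univ.filter (fun i => D i = 1), f i
      + ∑ i ∈ univ.filter (fun i => D i = 0), f i := by
  rw [← sum_filter_add_sum_filter_not univ (fun i => D i = 1) f]
  congr 2
  ext i
  rcases hD i with h | h <;> simp [h]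

theorem sum_sum_mul_imputed_eq {K : Type*} [CommRing K] (A B : Finset ι) (w : ι → ι → K)
    (Y m R : ι → K)
    (hR : ∀ j ∈ B, R j = Y j - m j) :
    ∑ i ∈ A, ∑ j ∈ B, w i j * (Y j + m i - m j)
      = ∑ j ∈ B, (∑ i ∈ A, w i j) * R j + ∑ i ∈ A, (∑ j ∈ B, w i j) * m i := by
  simp_rw [sum_mul]
  rw [sum_comm (s := B), ← sum_add_distrib]
  refine sum_congr rfl fun i _ => ?_
  rw [← sum_add_distrib]
  refine sum_congr rfl fun j hj => ?_
  rw [hR j hj]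
  ring

end Imputation

theorem regression_adjusted_imputation_aipw_decomposition_general
    (n d : ℕ)
    (D : Fin n → ℕ) (hD : ∀ i, D i = 0 ∨ D i = 1)
    (Y : Fin n → ℝ) (X : Fin n → EuclideanSpace ℝ (Fin d))
    (w : Fin n → Fin n → ℝ)
    (μ : ℕ → EuclideanSpace ℝ (Fin d) → ℝ)
    (R : Fin n → ℝ) (hR : ∀ i, R i = Y i - μ (D i) (X i))
    (Yhat0 Yhat1 : Fin n → ℝ)
    (hY0 : ∀ i, Yhat0 i = if D i = 0 then Y i else
      ∑ j ∈ univ.filter (fun j => D j = 0), w i j * (Y j + μ 0 (X i) - μ 0 (X j)))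
    (hY1 : ∀ i, Yhat1 i = if D i = 1 then Y i else
      ∑ j ∈ univ.filter (fun j => D j = 1), w i j * (Y j + μ 1 (X i) - μ 1 (X j)))
    (τw τreg : ℝ)
    (hτw : τw = (1 / n) * ∑ i, (Yhat1 i - Yhat0 i))
    (hτreg : τreg = (1 / n) * ∑ i, (μ 1 (X i) - μ 0 (X i))) :
    τw = τreg
      + (1 / n) * ∑ i ∈ univ.filter (fun i => D i = 1),
          (1 + ∑ j ∈ univ.filter (fun j => D j = 0), w j i) * R i
      - (1 / n) * ∑ i ∈ univ.filter (fun i => D i = 0),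
          (1 + ∑ j ∈ univ.filter (fun j => D j = 1), w j i) * R i
      + (1 / n) * ∑ i, (2 * (D i : ℝ) - 1)
          * (1 - ∑ j ∈ univ.filter (fun j => D j = 1 - D i), w i j)
          * μ (1 - D i) (X i) := by
  set T := univ.filter (fun i => D i = 1)
  set C := univ.filter (fun i => D i = 0)
  have mem_T {i} (hi : i ∈ T) : D i = 1 := (mem_filter.1 hi).2
  have mem_C {i} (hi : i ∈ C) : D i = 0 := (mem_filter.1 hi).2
  have diff_T : ∀ i ∈ T, Yhat1 i - Yhat0 i
      = R i + μ 1 (X i) - ∑ j ∈ C, w i j * (Y j + μ 0 (X i) - μ 0 (X j)) := fun i hi => by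
    rw [hY0, hY1, hR, mem_T hi]; simp
  have diff_C : ∀ i ∈ C, Yhat1 i - Yhat0 i
      = ∑ j ∈ T, w i j * (Y j + μ 1 (X i) - μ 1 (X j)) - (R i + μ 0 (X i)) := fun i hi => by
    rw [hY0, hY1, hR, mem_C hi]; simp
  have bias_T : ∀ i ∈ T, (2 * (D i : ℝ) - 1)
      * (1 - ∑ j ∈ univ.filter (fun j => D j = 1 - D i), w i j) * μ (1 - D i) (X i)
      = (1 - ∑ j ∈ C, w i j) * μ 0 (X i) := fun i hi => by
    simp only [mem_T hi, Nat.sub_self, Nat.cast_one]; ring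
  have bias_C : ∀ i ∈ C, (2 * (D i : ℝ) - 1)
      * (1 - ∑ j ∈ univ.filter (fun j => D j = 1 - D i), w i j) * μ (1 - D i) (X i)
      = -((1 - ∑ j ∈ T, w i j) * μ 1 (X i)) := fun i hi => by
    simp only [mem_C hi, Nat.sub_zero, Nat.cast_zero]; ring
  simp only [hτw, hτreg, sum_eq_sum_filter_eq_one_add_sum_filter_eq_zero hD]
  rw [sum_congr rfl diff_T, sum_congr rfl diff_C, sum_congr rfl bias_T, sum_congr rfl bias_C]
  simp only [sum_sub_distrib, sum_add_distrib]
  rw [sum_sum_mul_imputed_eq T C w Y (fun i => μ 0 (X i)) R fun j hj => by rw [hR, mem_C hj],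
    sum_sum_mul_imputed_eq C T w Y (fun i => μ 1 (X i)) R fun j hj => by rw [hR, mem_T hj]]
  simp only [add_mul, one_mul, sub_mul, sum_add_distrib, sum_sub_distrib, sum_neg_distrib]
  ring

/-- Lemma 1 of Lin & Han (2022): AIPW decomposition of the regression-adjusted
imputation estimator of the ATE. -/
theorem regression_adjusted_imputation_aipw_decomposition
    (n d : ℕ) (hn : 1 ≤ n)
    (D : Fin n → ℕ) (hD : ∀ i, D i = 0 ∨ D i = 1)
    (Y : Fin n → ℝ) (X : Fin n → EuclideanSpace ℝ (Fin d))
    (w : Fin n → Fin n → ℝ)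
    (μ : ℕ → EuclideanSpace ℝ (Fin d) → ℝ)
    (R : Fin n → ℝ) (hR : ∀ i, R i = Y i - μ (D i) (X i))
    (Yhat0 Yhat1 : Fin n → ℝ)
    (hY0 : ∀ i, Yhat0 i = if D i = 0 then Y i else
      ∑ j ∈ univ.filter (fun j => D j = 0), w i j * (Y j + μ 0 (X i) - μ 0 (X j)))
    (hY1 : ∀ i, Yhat1 i = if D i = 1 then Y i else
      ∑ j ∈ univ.filter (fun j => D j = 1), w i j * (Y j + μ 1 (X i) - μ 1 (X j)))
    (τw τreg : ℝ)
    (hτw : τw = (1 / n) * ∑ i, (Yhat1 i - Yhat0 i))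
    (hτreg : τreg = (1 / n) * ∑ i, (μ 1 (X i) - μ 0 (X i))) :
    τw = τreg
      + (1 / n) * ∑ i ∈ univ.filter (fun i => D i = 1),
          (1 + ∑ j ∈ univ.filter (fun j => D j = 0), w j i) * R i
      - (1 / n) * ∑ i ∈ univ.filter (fun i => D i = 0),
          (1 + ∑ j ∈ univ.filter (fun j => D j = 1), w j i) * R i
      + (1 / n) * ∑ i, (2 * (D i : ℝ) - 1)
          * (1 - ∑ j ∈ univ.filter (fun j => D j = 1 - D i), w i j)
          * μ (1 - D i) (X i) :=
  regression_adjusted_imputation_aipw_decomposition_general n d D hD Y X w μ R hR Yhat0 Yhat1 hY0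
    hY1 τw τreg hτw hτreg
end

section
/- Let d ≥ 1, S = [0,1]^d, α ∈ (0,1/2], ε ∈ (0,1), φ ∈ (0,1), θ ≥ 1, and let s ≥ α^{−1}θ. Suppose a (random) rectangular leaf L(x) containing a point x ∈ S is produced by c_p ≥ (φ/d)·log(s/(α^{−1}θ))/log(α^{−1}) axis-aligned splits along coordinate p, the total number of splits is at most log(s/θ)/log(α^{−1}), and each split along coordinate p, on the complement of a 'bad' event E_t of probability at most exp(−θα(log((1−ε)^{−1})−ε)), shrinks the p-th side length by a factor at most 1−(1−ε)α. Then for any positive integer k, E[diam_p^k(L(x) ∩ S)] ≤ (s/(α^{−1}θ))^{k·(φ/d)·log(1−(1−ε)α)/log(α^{−1})} + [log(s/θ)/log(α^{−1})]·exp(−θα(log((1−ε)^{−1})−ε)), where diam_p denotes the diameter along the p-th coordinate axis. -/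
open MeasureTheory

/-- Leaf-diameter moment bound (Lemma 2 of the paper) for `φ`-balanced,
`(α,θ)`-regular trees on `[0,1]^d`: combining deterministic shrinkage on the good
event with a union bound over the bad split events. -/
theorem balanced_regular_tree_leaf_diameter_moment_bound
    {Ω : Type*} [MeasurableSpace Ω] (P : Measure Ω) [IsProbabilityMeasure P]
    (d s θ k : ℕ) (hd : 1 ≤ d) (hθ : 1 ≤ θ) (hk : 1 ≤ k)
    (α ε φ : ℝ) (hα : 0 < α ∧ α ≤ 1/2) (hε : 0 < ε ∧ ε < 1) (hφ : 0 < φ ∧ φ < 1)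
    (hs : α⁻¹ * θ ≤ (s:ℝ))
    (Dp : Ω → ℝ) (hDpm : Measurable Dp) (hDp : ∀ ω, 0 ≤ Dp ω ∧ Dp ω ≤ 1)
    (cp : Ω → ℕ) (hcpm : Measurable cp)
    (hlo : ∀ ω, (φ / d) * (Real.log ((s:ℝ) / (α⁻¹ * θ)) / Real.log α⁻¹) ≤ (cp ω : ℝ))
    (hhi : ∀ ω, (cp ω : ℝ) ≤ Real.log ((s:ℝ) / θ) / Real.log α⁻¹)
    (Ebad : ℕ → Set Ω) (hEm : ∀ t, MeasurableSet (Ebad t))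
    (hEp : ∀ t, P (Ebad t)
      ≤ ENNReal.ofReal (Real.exp (-((θ:ℝ) * α * (Real.log (1-ε)⁻¹ - ε)))))
    (hgood : ∀ ω, (∀ t, t < cp ω → ω ∉ Ebad t) → Dp ω ≤ (1 - (1-ε)*α) ^ (cp ω)) :
    ∫ ω, (Dp ω) ^ k ∂P
      ≤ ((s:ℝ) / (α⁻¹ * θ)) ^ ((k:ℝ) * (φ / d) * Real.log (1 - (1-ε)*α) / Real.log α⁻¹)
        + (Real.log ((s:ℝ) / θ) / Real.log α⁻¹)
          * Real.exp (-((θ:ℝ) * α * (Real.log (1-ε)⁻¹ - ε))) := by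
  obtain ⟨hα0, hα2⟩ := hα
  obtain ⟨hε0, hε1⟩ := hε
  obtain ⟨hφ0, hφ1⟩ := hφ
  have hεα0 : 0 < (1-ε)*α := mul_pos (by linarith) hα0
  have hεαlt : (1-ε)*α < 1 := by nlinarith
  set r : ℝ := 1 - (1-ε)*α with hrdef
  have hr0 : 0 < r := by simp only [hrdef]; linarith
  have hr1 : r < 1 := by simp only [hrdef]; linarith
  have hαinv : (1:ℝ) < α⁻¹ := by
    rw [lt_inv_comm₀ one_pos hα0]; linarith
  have hlogα : 0 < Real.log α⁻¹ := Real.log_pos hαinv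
  have hθ0 : (0:ℝ) < θ := by exact_mod_cast hθ
  have hαθ0 : 0 < α⁻¹ * θ := mul_pos (by positivity) hθ0
  set A : ℝ := (s:ℝ) / (α⁻¹ * θ) with hAdef
  have hA1 : 1 ≤ A := (one_le_div hαθ0).mpr hs
  have hlogA : 0 ≤ Real.log A := Real.log_nonneg hA1
  set B : ℝ := A ^ ((k:ℝ) * (φ / d) * Real.log r / Real.log α⁻¹) with hBdef
  have hB0 : 0 ≤ B := Real.rpow_nonneg (by linarith) _
  set p : ℝ := Real.exp (-((θ:ℝ) * α * (Real.log (1-ε)⁻¹ - ε))) with hpdef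
  have hp0 : 0 ≤ p := Real.exp_nonneg _
  set L : ℝ := Real.log ((s:ℝ) / θ) / Real.log α⁻¹ with hLdef
  have hL0 : 0 ≤ L := by
    apply div_nonneg _ hlogα.le
    apply Real.log_nonneg
    rw [le_div_iff₀ hθ0]
    nlinarith
  set M : ℕ := ⌊L⌋₊ with hMdef
  set Bad : Set Ω := ⋃ t ∈ Finset.range M, Ebad t with hBaddef
  have hBadm : MeasurableSet Bad := Finset.measurableSet_biUnion _ (fun t _ => hEm t)
  -- pointwise bound
  have hpt : ∀ ω, (Dp ω) ^ k ≤ B + Set.indicator Bad (fun _ => (1:ℝ)) ω := by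
    intro ω
    by_cases hg : ∀ t, t < cp ω → ω ∉ Ebad t
    · have h1 : Dp ω ≤ r ^ (cp ω) := hgood ω hg
      have h2 : (Dp ω) ^ k ≤ (r ^ (cp ω)) ^ k :=
        pow_le_pow_left₀ (hDp ω).1 h1 k
      have h3 : (r ^ (cp ω)) ^ k = r ^ ((((cp ω) * k : ℕ)):ℝ) := by
        rw [← pow_mul, ← Real.rpow_natCast]
      have h4 : r ^ ((((cp ω) * k : ℕ)):ℝ) ≤ r ^ ((k:ℝ) * ((φ/d) * (Real.log A / Real.log α⁻¹))) := by
        apply Real.rpow_le_rpow_of_exponent_ge hr0 hr1.le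
        push_cast
        have := hlo ω
        have hk0 : (0:ℝ) < k := by exact_mod_cast hk
        calc (k:ℝ) * ((φ/d) * (Real.log A / Real.log α⁻¹))
            ≤ (k:ℝ) * (cp ω : ℝ) := by
              apply mul_le_mul_of_nonneg_left _ hk0.le
              exact this
          _ = (cp ω : ℝ) * k := by ring
      have h5 : r ^ ((k:ℝ) * ((φ/d) * (Real.log A / Real.log α⁻¹))) = B := by
        rw [hBdef, Real.rpow_def_of_pos hr0, Real.rpow_def_of_pos (by linarith : (0:ℝ) < A)]
        congr 1
        ring
      have : (Dp ω) ^ k ≤ B := by rw [← h5]; rw [h3] at h2; exact h2.trans h4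
      have hind : 0 ≤ Set.indicator Bad (fun _ => (1:ℝ)) ω :=
        Set.indicator_nonneg (fun _ _ => zero_le_one) ω
      linarith
    · push_neg at hg
      obtain ⟨t, ht, htE⟩ := hg
      have hωBad : ω ∈ Bad := by
        simp only [hBaddef, Set.mem_iUnion]
        refine ⟨t, ?_, htE⟩
        simp only [Finset.mem_range]
        have hcpM : cp ω ≤ M := Nat.le_floor (hhi ω)
        omega
      rw [Set.indicator_of_mem hωBad]
      have : (Dp ω) ^ k ≤ 1 := pow_le_one₀ (hDp ω).1 (hDp ω).2
      linarith
  -- integrability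
  have hint : Integrable (fun ω => (Dp ω) ^ k) P := by
    apply Integrable.mono' (integrable_const (1:ℝ)) ((hDpm.pow_const k).aestronglyMeasurable)
    filter_upwards with ω
    rw [Real.norm_eq_abs, abs_of_nonneg (pow_nonneg (hDp ω).1 k)]
    exact pow_le_one₀ (hDp ω).1 (hDp ω).2
  have hintInd : Integrable (fun ω => Set.indicator Bad (fun _ => (1:ℝ)) ω) P :=
    (integrable_const (1:ℝ)).indicator hBadm
  have hintRHS : Integrable (fun ω => B + Set.indicator Bad (fun _ => (1:ℝ)) ω) P :=
    (integrable_const B).add hintInd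
  have hI : ∫ ω, (Dp ω) ^ k ∂P ≤ ∫ ω, (B + Set.indicator Bad (fun _ => (1:ℝ)) ω) ∂P :=
    integral_mono hint hintRHS hpt
  have hI2 : ∫ ω, (B + Set.indicator Bad (fun _ => (1:ℝ)) ω) ∂P
      = B + (P Bad).toReal := by
    rw [integral_add (integrable_const B) hintInd, integral_const,
      integral_indicator_const _ hBadm]
    simp
    rfl
  -- measure bound
  have hPB : (P Bad).toReal ≤ L * p := by
    have h1 : P Bad ≤ ∑ t ∈ Finset.range M, P (Ebad t) :=
      measure_biUnion_finset_le _ _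
    have h2 : ∑ t ∈ Finset.range M, P (Ebad t) ≤ M * ENNReal.ofReal p := by
      calc ∑ t ∈ Finset.range M, P (Ebad t)
          ≤ ∑ _t ∈ Finset.range M, ENNReal.ofReal p :=
            Finset.sum_le_sum (fun t _ => hEp t)
        _ = M * ENNReal.ofReal p := by
            rw [Finset.sum_const, Finset.card_range, nsmul_eq_mul]
    have h3 : P Bad ≤ ENNReal.ofReal ((M:ℝ) * p) := by
      refine (h1.trans h2).trans_eq ?_
      rw [ENNReal.ofReal_mul (by positivity), ENNReal.ofReal_natCast]
    have h4 : (P Bad).toReal ≤ (M:ℝ) * p := by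
      refine (ENNReal.toReal_le_of_le_ofReal (by positivity) h3)
    refine h4.trans ?_
    exact mul_le_mul_of_nonneg_right (Nat.floor_le hL0) hp0
  calc ∫ ω, (Dp ω) ^ k ∂P ≤ B + (P Bad).toReal := by rw [← hI2]; exact hI
    _ ≤ B + L * p := by linarith
end
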